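/- If θ ≥ max(1, 2‖P‖L√n/μ), then for all x, e ∈ ℝⁿ and all v ∈ ℝ: 2·(Δ_θ⁻¹e)ᵀ P Δ_θ⁻¹[(A + Δ_θ k cᵀ)e + Δ_θ k v + g(x,e)] ≤ −(θμ/(2‖P‖))·(Δ_θ⁻¹e)ᵀ P (Δ_θ⁻¹e) + (2‖P‖²‖k‖²/(θμ))·v², where g(x,e) has components g_i(x,e) = f_i(x₁+e₁,…,x_i+e_i) − f_i(x₁,…,x_i). -/

import Mathlib

/-!
In the scaled coordinates `η = Δ_θ⁻¹ e` the triangular structure gives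
`Δ_θ⁻¹ (A + Δ_θ k cᵀ) Δ_θ = θ (A + k cᵀ)`, so the linear part contributes at most `-2θμ‖η‖²`
by the Lyapunov inequality. Since `g_i` only depends on the first `i` coordinates and `θ ≥ 1`,
each component of `Δ_θ⁻¹ g` is bounded by `L‖η‖`, so the nonlinearity costs at most
`2‖P‖L√n‖η‖² ≤ θμ‖η‖²`. Young's inequality splits the measurement term into `(θμ/2)‖η‖²` plus
the `v²` term, and `ηᵀPη ≤ ‖P‖‖η‖²` converts the remaining `-(θμ/2)‖η‖²` into the stated bound.
-/

open Matrix

section FiniteDim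

variable {ι : Type*} [Fintype ι]

lemma norm_toLp_eq_sqrt_sum_sq (x : ι → ℝ) :
    ‖(WithLp.toLp 2 x : EuclideanSpace ℝ ι)‖ = √(∑ i, x i ^ 2) := by
  simp [EuclideanSpace.norm_eq]

lemma abs_dotProduct_mulVec_le [DecidableEq ι] (M : Matrix ι ι ℝ) (x y : ι → ℝ) :
    |x ⬝ᵥ (M *ᵥ y)| ≤ ‖toEuclideanCLM (𝕜 := ℝ) M‖ * √(∑ i, x i ^ 2) * √(∑ i, y i ^ 2) := by
  have hinner : x ⬝ᵥ (M *ᵥ y) =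
      inner ℝ (WithLp.toLp 2 x) (toEuclideanCLM (𝕜 := ℝ) M (WithLp.toLp 2 y)) := by
    simp [dotProduct, PiLp.inner_apply, mul_comm]
  rw [hinner, ← norm_toLp_eq_sqrt_sum_sq, ← norm_toLp_eq_sqrt_sum_sq]
  calc _ ≤ ‖WithLp.toLp 2 x‖ * ‖toEuclideanCLM (𝕜 := ℝ) M (WithLp.toLp 2 y)‖ :=
        abs_real_inner_le_norm _ _
    _ ≤ ‖WithLp.toLp 2 x‖ * (‖toEuclideanCLM (𝕜 := ℝ) M‖ * ‖WithLp.toLp 2 y‖) := by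
        gcongr; exact (toEuclideanCLM (𝕜 := ℝ) M).le_opNorm _
    _ = _ := by ring

lemma dotProduct_mulVec_self_le [DecidableEq ι] (M : Matrix ι ι ℝ) (x : ι → ℝ) :
    x ⬝ᵥ (M *ᵥ x) ≤ ‖toEuclideanCLM (𝕜 := ℝ) M‖ * ∑ i, x i ^ 2 := by
  have h := (le_abs_self _).trans (abs_dotProduct_mulVec_le M x x)
  rwa [mul_assoc, Real.mul_self_sqrt (Finset.sum_nonneg fun i _ => sq_nonneg _)] at h

lemma dotProduct_mulVec_mulVec_le_of_lyapunov {P B : Matrix ι ι ℝ} (hP : P.IsSymm) {μ : ℝ}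
    (hLyap : ∀ z : ι → ℝ, z ⬝ᵥ ((P * B + Bᵀ * P) *ᵥ z) ≤ -2 * μ * ∑ i, z i ^ 2) (z : ι → ℝ) :
    z ⬝ᵥ (P *ᵥ (B *ᵥ z)) ≤ -μ * ∑ i, z i ^ 2 := by
  have hsymm : z ⬝ᵥ ((Bᵀ * P) *ᵥ z) = z ⬝ᵥ (P *ᵥ (B *ᵥ z)) := by
    rw [← mulVec_mulVec, dotProduct_mulVec, vecMul_transpose, dotProduct_mulVec,
      ← mulVec_transpose, hP.eq, dotProduct_comm]
  have h := hLyap z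
  rw [add_mulVec, dotProduct_add, hsymm, ← mulVec_mulVec] at h
  linarith

lemma sqrt_sum_sq_le_of_abs_le {w : ι → ℝ} {C : ℝ} (h : ∀ i, |w i| ≤ C) :
    √(∑ i, w i ^ 2) ≤ √(Fintype.card ι) * C := by
  rcases isEmpty_or_nonempty ι with hι | ⟨⟨i₀⟩⟩
  · simp
  have hC : 0 ≤ C := (abs_nonneg _).trans (h i₀)
  calc √(∑ i, w i ^ 2) ≤ √(∑ _i : ι, C ^ 2) :=
        Real.sqrt_le_sqrt <| Finset.sum_le_sum fun i _ =>
          sq_le_sq' (abs_le.mp (h i)).1 (abs_le.mp (h i)).2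
    _ = √(Fintype.card ι) * C := by
        rw [Finset.sum_const, Finset.card_univ, nsmul_eq_mul, Real.sqrt_mul (Nat.cast_nonneg _),
          Real.sqrt_sq hC]

lemma dotProduct_mulVec_le_of_sqrt_sum_sq_le [DecidableEq ι] (M : Matrix ι ι ℝ) {x y : ι → ℝ}
    {C : ℝ} (hy : √(∑ i, y i ^ 2) ≤ C * √(∑ i, x i ^ 2)) :
    x ⬝ᵥ (M *ᵥ y) ≤ ‖toEuclideanCLM (𝕜 := ℝ) M‖ * C * ∑ i, x i ^ 2 := by
  have hx : √(∑ i, x i ^ 2) * √(∑ i, x i ^ 2) = ∑ i, x i ^ 2 := Real.mul_self_sqrt (by positivity)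
  calc x ⬝ᵥ (M *ᵥ y) ≤ ‖toEuclideanCLM (𝕜 := ℝ) M‖ * √(∑ i, x i ^ 2) * √(∑ i, y i ^ 2) :=
        (le_abs_self _).trans (abs_dotProduct_mulVec_le M x y)
    _ ≤ ‖toEuclideanCLM (𝕜 := ℝ) M‖ * √(∑ i, x i ^ 2) * (C * √(∑ i, x i ^ 2)) := by gcongr
    _ = ‖toEuclideanCLM (𝕜 := ℝ) M‖ * C * ∑ i, x i ^ 2 := by
        linear_combination (‖toEuclideanCLM (𝕜 := ℝ) M‖ * C) * hx

lemma two_mul_mul_dotProduct_mulVec_le [DecidableEq ι] (M : Matrix ι ι ℝ) (x y : ι → ℝ) (v : ℝ)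
    {ε : ℝ} (hε : 0 < ε) :
    2 * (v * (x ⬝ᵥ (M *ᵥ y))) ≤
      ε * ∑ i, x i ^ 2 + ε⁻¹ * (‖toEuclideanCLM (𝕜 := ℝ) M‖ * √(∑ i, y i ^ 2)) ^ 2 * v ^ 2 := by
  have h : v * (x ⬝ᵥ (M *ᵥ y)) ≤
      √(∑ i, x i ^ 2) * (‖toEuclideanCLM (𝕜 := ℝ) M‖ * √(∑ i, y i ^ 2) * |v|) := by
    refine (le_abs_self _).trans ((abs_mul _ _).trans_le ?_)
    have := abs_dotProduct_mulVec_le M x y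
    calc |v| * |x ⬝ᵥ (M *ᵥ y)| ≤ |v| * (‖toEuclideanCLM (𝕜 := ℝ) M‖ * √(∑ i, x i ^ 2) *
          √(∑ i, y i ^ 2)) := by gcongr
      _ = _ := by ring
  have hyoung := two_mul_le_add_mul_sq (a := √(∑ i, x i ^ 2))
    (b := ‖toEuclideanCLM (𝕜 := ℝ) M‖ * √(∑ i, y i ^ 2) * |v|) hε
  rw [Real.sq_sqrt (Finset.sum_nonneg fun i _ => sq_nonneg _), mul_pow _ |v|, sq_abs] at hyoung
  linarith

lemma div_norm_mul_dotProduct_mulVec_self_le [DecidableEq ι] (M : Matrix ι ι ℝ) (x : ι → ℝ)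
    {a : ℝ} (ha : 0 ≤ a) :
    a / ‖toEuclideanCLM (𝕜 := ℝ) M‖ * (x ⬝ᵥ (M *ᵥ x)) ≤ a * ∑ i, x i ^ 2 := by
  set N := ‖toEuclideanCLM (𝕜 := ℝ) M‖
  -- `N / N ≤ 1` also covers `N = 0`, where `a / N = 0`.
  have hN : 0 ≤ N := norm_nonneg _
  calc a / N * (x ⬝ᵥ (M *ᵥ x)) ≤ a / N * (N * ∑ i, x i ^ 2) := by
        gcongr; exact dotProduct_mulVec_self_le M x
    _ = a * (N / N) * ∑ i, x i ^ 2 := by ring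
    _ ≤ a * 1 * ∑ i, x i ^ 2 := by gcongr; exact div_self_le_one N
    _ = a * ∑ i, x i ^ 2 := by ring

lemma inv_diagonal_of_ne_zero [DecidableEq ι] {K : Type*} [Field K] {d : ι → K}
    (hd : ∀ i, d i ≠ 0) : (diagonal d)⁻¹ = diagonal d⁻¹ :=
  inv_eq_right_inv <| by
    rw [diagonal_mul_diagonal, ← diagonal_one]
    exact congrArg diagonal (funext fun i => mul_inv_cancel₀ (hd i))

lemma inv_mulVec_add_smul_mulVec_add [DecidableEq ι] {R : Type*} [CommRing R]
    {Δ M B : Matrix ι ι R} (hΔ : IsUnit Δ.det) {θ : R} (hM : M * Δ = θ • (Δ * B))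
    (e k g : ι → R) (v : R) :
    Δ⁻¹ *ᵥ (M *ᵥ e + v • (Δ *ᵥ k) + g) = θ • (B *ᵥ (Δ⁻¹ *ᵥ e)) + v • k + Δ⁻¹ *ᵥ g := by
  have he : e = Δ *ᵥ (Δ⁻¹ *ᵥ e) := by rw [mulVec_mulVec, mul_nonsing_inv _ hΔ, one_mulVec]
  have hMe : Δ⁻¹ *ᵥ (M *ᵥ e) = θ • (B *ᵥ (Δ⁻¹ *ᵥ e)) := by
    conv_lhs => rw [he]
    rw [mulVec_mulVec, mulVec_mulVec, Matrix.mul_assoc Δ⁻¹, hM, Matrix.mul_smul,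
      ← Matrix.mul_assoc, nonsing_inv_mul _ hΔ, Matrix.one_mul, smul_mulVec]
  rw [mulVec_add, mulVec_add, hMe, mulVec_smul, mulVec_mulVec k, nonsing_inv_mul _ hΔ, one_mulVec]

end FiniteDim

section HighGain

variable {n : ℕ} {R : Type*} [CommRing R]

lemma shift_mul_diagonal_pow {A : Matrix (Fin n) (Fin n) R}
    (hA : ∀ i j : Fin n, A i j = if (j : ℕ) = (i : ℕ) + 1 then 1 else 0) (θ : R) :
    A * diagonal (fun i : Fin n => θ ^ ((i : ℕ) + 1)) =
      θ • (diagonal (fun i : Fin n => θ ^ ((i : ℕ) + 1)) * A) := by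
  ext i j
  simp only [mul_diagonal, diagonal_mul, Matrix.smul_apply, smul_eq_mul, hA]
  split_ifs with h
  · rw [h]; ring
  · simp

lemma vecMulVec_mul_diagonal_pow (k : Fin n → R) {c : Fin n → R}
    (hc : ∀ i, c i = if (i : ℕ) = 0 then 1 else 0) (θ : R) :
    vecMulVec k c * diagonal (fun i : Fin n => θ ^ ((i : ℕ) + 1)) = θ • vecMulVec k c := by
  ext i j
  simp only [mul_diagonal, Matrix.smul_apply, smul_eq_mul, vecMulVec_apply, hc]
  split_ifs with h
  · rw [h]; ring
  · simp

lemma observerMatrix_mul_diagonal_pow {A : Matrix (Fin n) (Fin n) R} {c : Fin n → R}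
    (hA : ∀ i j : Fin n, A i j = if (j : ℕ) = (i : ℕ) + 1 then 1 else 0)
    (hc : ∀ i, c i = if (i : ℕ) = 0 then 1 else 0) (k : Fin n → R) (θ : R) :
    (A + diagonal (fun i : Fin n => θ ^ ((i : ℕ) + 1)) * vecMulVec k c) *
        diagonal (fun i : Fin n => θ ^ ((i : ℕ) + 1)) =
      θ • (diagonal (fun i : Fin n => θ ^ ((i : ℕ) + 1)) * (A + vecMulVec k c)) := by
  rw [Matrix.add_mul, Matrix.mul_assoc, shift_mul_diagonal_pow hA, vecMulVec_mul_diagonal_pow k hc,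
    Matrix.mul_smul, ← smul_add, ← Matrix.mul_add]

lemma abs_sub_le_of_lipschitz_on_initial_coords {L θ : ℝ} (hL : 0 ≤ L) (hθ : 1 ≤ θ) (i : Fin n)
    {F : (Fin n → ℝ) → ℝ}
    (hF : ∀ x z : Fin n → ℝ, |F x - F z| ≤
      L * √(∑ j ∈ Finset.univ.filter (fun j => j ≤ i), (x j - z j) ^ 2))
    (x η : Fin n → ℝ) :
    |F (x + fun j : Fin n => θ ^ ((j : ℕ) + 1) * η j) - F x| ≤
      θ ^ ((i : ℕ) + 1) * (L * √(∑ j, η j ^ 2)) := by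
  have hsum : ∑ j ∈ Finset.univ.filter (fun j => j ≤ i), (θ ^ ((j : ℕ) + 1) * η j) ^ 2 ≤
      (θ ^ ((i : ℕ) + 1)) ^ 2 * ∑ j, η j ^ 2 := by
    rw [Finset.mul_sum]
    refine (Finset.sum_le_sum fun j hj => ?_).trans
      (Finset.sum_le_sum_of_subset_of_nonneg (Finset.filter_subset _ _) fun j _ _ => by positivity)
    have hji : (j : ℕ) ≤ i := (Finset.mem_filter.mp hj).2
    rw [mul_pow]
    gcongr
  calc |F (x + fun j : Fin n => θ ^ ((j : ℕ) + 1) * η j) - F x|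
      ≤ L * √(∑ j ∈ Finset.univ.filter (fun j => j ≤ i), (θ ^ ((j : ℕ) + 1) * η j) ^ 2) := by
        simpa using hF (x + fun j : Fin n => θ ^ ((j : ℕ) + 1) * η j) x
    _ ≤ L * √((θ ^ ((i : ℕ) + 1)) ^ 2 * ∑ j, η j ^ 2) := by gcongr
    _ = θ ^ ((i : ℕ) + 1) * (L * √(∑ j, η j ^ 2)) := by
        rw [Real.sqrt_mul (by positivity), Real.sqrt_sq (by positivity)]; ring

lemma sqrt_sum_sq_scaled_increment_le {L θ : ℝ} (hL : 0 ≤ L) (hθ : 1 ≤ θ)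
    {f : Fin n → (Fin n → ℝ) → ℝ}
    (hfLip : ∀ i (x z : Fin n → ℝ), |f i x - f i z| ≤
      L * √(∑ j ∈ Finset.univ.filter (fun j => j ≤ i), (x j - z j) ^ 2))
    (x η : Fin n → ℝ) :
    √(∑ i : Fin n, ((θ ^ ((i : ℕ) + 1))⁻¹ *
        (f i (x + fun j : Fin n => θ ^ ((j : ℕ) + 1) * η j) - f i x)) ^ 2) ≤
      √n * (L * √(∑ j, η j ^ 2)) := by
  have hθ₀ : 0 < θ := one_pos.trans_le hθ
  refine (sqrt_sum_sq_le_of_abs_le fun i => ?_).trans_eq (by rw [Fintype.card_fin])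
  rw [abs_mul, abs_inv, abs_of_pos (by positivity), inv_mul_le_iff₀ (by positivity)]
  exact abs_sub_le_of_lipschitz_on_initial_coords hL hθ i (hfLip i) x η

lemma sqrt_sum_sq_inv_mulVec_increment_le {L θ : ℝ} (hL : 0 ≤ L) (hθ : 1 ≤ θ)
    {f : Fin n → (Fin n → ℝ) → ℝ}
    (hfLip : ∀ i (x z : Fin n → ℝ), |f i x - f i z| ≤
      L * √(∑ j ∈ Finset.univ.filter (fun j => j ≤ i), (x j - z j) ^ 2))
    {Δ : Matrix (Fin n) (Fin n) ℝ} (hΔ : Δ = diagonal fun i : Fin n => θ ^ ((i : ℕ) + 1))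
    (x e : Fin n → ℝ) :
    √(∑ i, (Δ⁻¹ *ᵥ fun i => f i (x + e) - f i x) i ^ 2) ≤
      √n * L * √(∑ i, (Δ⁻¹ *ᵥ e) i ^ 2) := by
  have hpow : ∀ i : Fin n, θ ^ ((i : ℕ) + 1) ≠ 0 := fun i => pow_ne_zero _ (by linarith)
  have hΔinv : Δ⁻¹ = diagonal fun i : Fin n => (θ ^ ((i : ℕ) + 1))⁻¹ := by
    rw [hΔ, inv_diagonal_of_ne_zero hpow]; rfl
  set η := Δ⁻¹ *ᵥ e
  have he : e = fun j : Fin n => θ ^ ((j : ℕ) + 1) * η j := by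
    funext j
    simp only [η, hΔinv, mulVec_diagonal, mul_inv_cancel_left₀ (hpow j)]
  rw [he, hΔinv, mul_assoc]
  simpa only [mulVec_diagonal] using sqrt_sum_sq_scaled_increment_le hL hθ hfLip x η

end HighGain

theorem stmt5_general (n : ℕ) (L : ℝ) (hL : 0 ≤ L)
    (f : Fin n → (Fin n → ℝ) → ℝ)
    (hfLip : ∀ i (x z : Fin n → ℝ), |f i x - f i z| ≤
      L * Real.sqrt (∑ j ∈ Finset.univ.filter (fun j => j ≤ i), (x j - z j) ^ 2))
    (A : Matrix (Fin n) (Fin n) ℝ)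
    (hA : ∀ i j : Fin n, A i j = if (j : ℕ) = (i : ℕ) + 1 then 1 else 0)
    (c : Fin n → ℝ) (hc : ∀ i, c i = if (i : ℕ) = 0 then 1 else 0)
    (k : Fin n → ℝ) (θ : ℝ)
    (Δ : Matrix (Fin n) (Fin n) ℝ)
    (hΔ : Δ = Matrix.diagonal (fun i : Fin n => θ ^ ((i : ℕ) + 1)))
    (P : Matrix (Fin n) (Fin n) ℝ) (hP : P.PosDef)
    (μ : ℝ) (hμ : 0 < μ)
    (hLyap : ∀ z : Fin n → ℝ,
      z ⬝ᵥ ((P * (A + Matrix.vecMulVec k c) + (A + Matrix.vecMulVec k c)ᵀ * P) *ᵥ z)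
        ≤ -2 * μ * ∑ i, z i ^ 2)
    (hθ : max 1 (2 * ‖Matrix.toEuclideanCLM (𝕜 := ℝ) P‖ * L * Real.sqrt n / μ) ≤ θ) :
    ∀ (x e : Fin n → ℝ) (v : ℝ),
      2 * ((Δ⁻¹ *ᵥ e) ⬝ᵥ (P *ᵥ (Δ⁻¹ *ᵥ
          ((A + Δ * Matrix.vecMulVec k c) *ᵥ e + v • (Δ *ᵥ k) + fun i => f i (x + e) - f i x))))
        ≤ -(θ * μ / (2 * ‖Matrix.toEuclideanCLM (𝕜 := ℝ) P‖)) *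
            ((Δ⁻¹ *ᵥ e) ⬝ᵥ (P *ᵥ (Δ⁻¹ *ᵥ e)))
          + (2 * ‖Matrix.toEuclideanCLM (𝕜 := ℝ) P‖ ^ 2 * (Real.sqrt (∑ i, k i ^ 2)) ^ 2
              / (θ * μ)) * v ^ 2 := by
  intro x e v
  have hθ₁ : 1 ≤ θ := (le_max_left _ _).trans hθ
  have hθμ : 0 < θ * μ := mul_pos (one_pos.trans_le hθ₁) hμ
  have hgain : 2 * ‖toEuclideanCLM (𝕜 := ℝ) P‖ * L * √n ≤ θ * μ := by
    have h := (le_max_right _ _).trans hθ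
    rwa [div_le_iff₀ hμ] at h
  have hΔunit : IsUnit Δ.det := by
    rw [hΔ, det_diagonal]
    exact (Finset.prod_ne_zero_iff.mpr fun i _ => pow_ne_zero _ (by linarith)).isUnit
  rw [inv_mulVec_add_smul_mulVec_add hΔunit (hΔ ▸ observerMatrix_mul_diagonal_pow hA hc k θ)]
  simp only [mulVec_add, dotProduct_add, mulVec_smul, dotProduct_smul, smul_eq_mul]
  have hdrift := dotProduct_mulVec_mulVec_le_of_lyapunov
    (isHermitian_iff_isSymm.mp hP.isHermitian) hLyap (Δ⁻¹ *ᵥ e)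
  have hnonlin := dotProduct_mulVec_le_of_sqrt_sum_sq_le P
    (sqrt_sum_sq_inv_mulVec_increment_le hL hθ₁ hfLip hΔ x e)
  have hinput := two_mul_mul_dotProduct_mulVec_le P (Δ⁻¹ *ᵥ e) k v (half_pos hθμ)
  have hrate := div_norm_mul_dotProduct_mulVec_self_le P (Δ⁻¹ *ᵥ e) (half_pos hθμ).le
  rw [inv_div] at hinput
  rw [div_div] at hrate
  have hS : 0 ≤ ∑ i, (Δ⁻¹ *ᵥ e) i ^ 2 := by positivity
  have hv : 2 / (θ * μ) * (‖toEuclideanCLM (𝕜 := ℝ) P‖ * √(∑ i, k i ^ 2)) ^ 2 * v ^ 2 =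
      2 * ‖toEuclideanCLM (𝕜 := ℝ) P‖ ^ 2 * √(∑ i, k i ^ 2) ^ 2 / (θ * μ) * v ^ 2 := by ring
  linarith [mul_le_mul_of_nonneg_left hdrift (by linarith : 0 ≤ θ),
    mul_le_mul_of_nonneg_right hgain hS]

/-- The Lyapunov ISS inequality for the scaled high-gain observer error with
measurement error `v`: if `θ ≥ max(1, 2‖P‖L√n/μ)` then
`2 (Δ_θ⁻¹e)ᵀ P Δ_θ⁻¹[(A + Δ_θ k cᵀ)e + Δ_θ k v + g(x,e)]
  ≤ -(θμ/(2‖P‖)) (Δ_θ⁻¹e)ᵀ P (Δ_θ⁻¹e) + (2‖P‖²‖k‖²/(θμ)) v²`. -/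
theorem stmt5 (n : ℕ) (hn : 1 ≤ n) (L : ℝ) (hL : 0 ≤ L)
    (f : Fin n → (Fin n → ℝ) → ℝ)
    (hf0 : ∀ i, f i (fun _ => 0) = 0)
    (hfLip : ∀ i (x z : Fin n → ℝ), |f i x - f i z| ≤
      L * Real.sqrt (∑ j ∈ Finset.univ.filter (fun j => j ≤ i), (x j - z j) ^ 2))
    (A : Matrix (Fin n) (Fin n) ℝ)
    (hA : ∀ i j : Fin n, A i j = if (j : ℕ) = (i : ℕ) + 1 then 1 else 0)
    (c : Fin n → ℝ) (hc : ∀ i, c i = if (i : ℕ) = 0 then 1 else 0)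
    (k : Fin n → ℝ) (θ : ℝ) (hθpos : 0 < θ)
    (Δ : Matrix (Fin n) (Fin n) ℝ)
    (hΔ : Δ = Matrix.diagonal (fun i : Fin n => θ ^ ((i : ℕ) + 1)))
    (P : Matrix (Fin n) (Fin n) ℝ) (hP : P.PosDef)
    (μ : ℝ) (hμ : 0 < μ)
    (hLyap : ∀ z : Fin n → ℝ,
      z ⬝ᵥ ((P * (A + Matrix.vecMulVec k c) + (A + Matrix.vecMulVec k c)ᵀ * P) *ᵥ z)
        ≤ -2 * μ * ∑ i, z i ^ 2)
    (hθ : max 1 (2 * ‖Matrix.toEuclideanCLM (𝕜 := ℝ) P‖ * L * Real.sqrt n / μ) ≤ θ) :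
    ∀ (x e : Fin n → ℝ) (v : ℝ),
      2 * ((Δ⁻¹ *ᵥ e) ⬝ᵥ (P *ᵥ (Δ⁻¹ *ᵥ
          ((A + Δ * Matrix.vecMulVec k c) *ᵥ e + v • (Δ *ᵥ k) + fun i => f i (x + e) - f i x))))
        ≤ -(θ * μ / (2 * ‖Matrix.toEuclideanCLM (𝕜 := ℝ) P‖)) *
            ((Δ⁻¹ *ᵥ e) ⬝ᵥ (P *ᵥ (Δ⁻¹ *ᵥ e)))
          + (2 * ‖Matrix.toEuclideanCLM (𝕜 := ℝ) P‖ ^ 2 * (Real.sqrt (∑ i, k i ^ 2)) ^ 2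
              / (θ * μ)) * v ^ 2 :=
  stmt5_general n L hL f hfLip A hA c hc k θ Δ hΔ P hP μ hμ hLyap hθ
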